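/- arXiv:0908.2195 — 4 statements merged into one kernel-verified Lean document; each statement's English description precedes it below -/
import Mathlib

section
/- Every element Q of SL(2,ℤ) can be written as Q = ε·V·T, where ε ∈ {1, -1}, V ∈ {identity, S}, and T is an element of the submonoid of SL(2,ℤ) generated by {A, B} or an element of the submonoid generated by {A⁻¹, B⁻¹} (in particular T may be the identity). Equivalently, every element of PSL(2,ℤ) can be written as V·T where V is the identity or the class of S, and T is a product of nonnegative powers of A and B only, or of A⁻¹ and B⁻¹ only. -/
open Matrix MatrixGroups

def A : SL(2,ℤ) := ⟨!![1,1;0,1], by norm_num [Matrix.det_fin_two_of]⟩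
def B : SL(2,ℤ) := ⟨!![1,0;1,1], by norm_num [Matrix.det_fin_two_of]⟩
def S : SL(2,ℤ) := ⟨!![0,1;-1,0], by norm_num [Matrix.det_fin_two_of]⟩

private def mk' (a b c d : ℤ) (h : a*d - b*c = 1) : SL(2,ℤ) :=
  ⟨!![a,b;c,d], by rw [Matrix.det_fin_two_of]; linarith⟩

private lemma mk_eq_A_mul (a b c d : ℤ) (h : a*d - b*c = 1) (h' : (a-c)*d - (b-d)*c = 1) :
    mk' a b c d h = A * mk' (a-c) (b-d) c d h' := by
  ext i j
  fin_cases i <;> fin_cases j <;>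
    simp only [Matrix.SpecialLinearGroup.coe_mul, Matrix.SpecialLinearGroup.coe_neg, Matrix.SpecialLinearGroup.coe_one] <;>
    simp [mk', A, Matrix.mul_apply, Fin.sum_univ_two]

private lemma mk_eq_B_mul (a b c d : ℤ) (h : a*d - b*c = 1) (h' : a*(d-b) - b*(c-a) = 1) :
    mk' a b c d h = B * mk' a b (c-a) (d-b) h' := by
  ext i j
  fin_cases i <;> fin_cases j <;>
    simp only [Matrix.SpecialLinearGroup.coe_mul, Matrix.SpecialLinearGroup.coe_neg, Matrix.SpecialLinearGroup.coe_one] <;>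
    simp [mk', B, Matrix.mul_apply, Fin.sum_univ_two]

private lemma mk_one (h : (1:ℤ)*1 - 0*0 = 1) : mk' 1 0 0 1 h = 1 := by
  ext i j
  fin_cases i <;> fin_cases j <;> simp [mk']

/-- Nonnegative matrices lie in the monoid generated by A and B. -/
private lemma memP : ∀ n : ℕ, ∀ a b c d : ℤ, ∀ h : a*d - b*c = 1,
    0 ≤ a → 0 ≤ b → 0 ≤ c → 0 ≤ d → (a+b+c+d).toNat ≤ n →
    mk' a b c d h ∈ Submonoid.closure ({A, B} : Set SL(2,ℤ)) := by
  intro n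
  induction n with
  | zero =>
    intro a b c d h ha hb hc hd hn
    exfalso
    have : a = 0 ∧ b = 0 ∧ c = 0 ∧ d = 0 := by omega
    obtain ⟨rfl, rfl, rfl, rfl⟩ := this
    simp at h
  | succ n ih =>
    intro a b c d h ha hb hc hd hn
    have hcd : ¬(c = 0 ∧ d = 0) := by rintro ⟨rfl, rfl⟩; simp at h
    have hab : ¬(a = 0 ∧ b = 0) := by rintro ⟨rfl, rfl⟩; simp at h
    by_cases h1 : c ≤ a ∧ d ≤ b
    · have h' : (a-c)*d - (b-d)*c = 1 := by linear_combination h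
      rw [mk_eq_A_mul a b c d h h']
      exact Submonoid.mul_mem _
        (Submonoid.subset_closure (by simp))
        (ih (a-c) (b-d) c d h' (by linarith [h1.1]) (by linarith [h1.2]) hc hd (by omega))
    · by_cases h2 : a ≤ c ∧ b ≤ d
      · have h' : a*(d-b) - b*(c-a) = 1 := by linear_combination h
        rw [mk_eq_B_mul a b c d h h']
        exact Submonoid.mul_mem _
          (Submonoid.subset_closure (by simp))
          (ih a b (c-a) (d-b) h' ha hb (by linarith [h2.1]) (by linarith [h2.2]) (by omega))
      · push_neg at h1 h2
        rcases le_or_gt c a with hca | hca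
        · have hbd : b < d := h1 hca
          have hac : c < a := by
            rcases hca.lt_or_eq with h' | h'
            · exact h'
            · exfalso; have := h2 (le_of_eq h'.symm); omega
          have hbc0 : b + c ≤ 0 := by nlinarith
          have hb0 : b = 0 := by omega
          have hc0 : c = 0 := by omega
          subst hb0 hc0
          have had : a * d = 1 := by linarith
          have ha1 : a = 1 ∧ d = 1 := by
            rcases Int.mul_eq_one_iff_eq_one_or_neg_one.1 had with ⟨e1,e2⟩ | ⟨e1,e2⟩
            · exact ⟨e1, e2⟩
            · omega
          obtain ⟨rfl, rfl⟩ := ha1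
          rw [mk_one]
          exact Submonoid.one_mem _
        · have hdb : d < b := h2 hca.le
          exfalso
          nlinarith

private lemma memP' (a b c d : ℤ) (h : a*d - b*c = 1)
    (ha : 0 ≤ a) (hb : 0 ≤ b) (hc : 0 ≤ c) (hd : 0 ≤ d) :
    mk' a b c d h ∈ Submonoid.closure ({A, B} : Set SL(2,ℤ)) :=
  memP (a+b+c+d).toNat a b c d h ha hb hc hd le_rfl

private lemma inv_mem_neg {x : SL(2,ℤ)} (hx : x ∈ Submonoid.closure ({A, B} : Set SL(2,ℤ))) :
    x⁻¹ ∈ Submonoid.closure ({A⁻¹, B⁻¹} : Set SL(2,ℤ)) := by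
  induction hx using Submonoid.closure_induction with
  | mem y hy =>
    rcases hy with rfl | rfl
    · exact Submonoid.subset_closure (by simp)
    · exact Submonoid.subset_closure (by simp)
  | one => simpa using Submonoid.one_mem _
  | mul y z hy hz ihy ihz => rw [_root_.mul_inv_rev]; exact Submonoid.mul_mem _ ihz ihy

private lemma mk_inv (a b c d : ℤ) (h : a*d - b*c = 1) (h' : d*a - (-b)*(-c) = 1) :
    mk' a b c d h = (mk' d (-b) (-c) a h')⁻¹ := by
  rw [eq_inv_iff_mul_eq_one]
  ext i j
  fin_cases i <;> fin_cases j <;>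
    simp only [Matrix.SpecialLinearGroup.coe_mul, Matrix.SpecialLinearGroup.coe_neg, Matrix.SpecialLinearGroup.coe_one] <;>
    simp [mk', Matrix.mul_apply, Fin.sum_univ_two] <;> linarith

/-- Matrices with nonneg diagonal and nonpos off-diagonal lie in the monoid
generated by A⁻¹ and B⁻¹. -/
private lemma memN (a b c d : ℤ) (h : a*d - b*c = 1)
    (ha : 0 ≤ a) (hb : b ≤ 0) (hc : c ≤ 0) (hd : 0 ≤ d) :
    mk' a b c d h ∈ Submonoid.closure ({A⁻¹, B⁻¹} : Set SL(2,ℤ)) := by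
  have h' : d*a - (-b)*(-c) = 1 := by linear_combination h
  rw [mk_inv a b c d h h']
  exact inv_mem_neg (memP' d (-b) (-c) a h' hd (by linarith) (by linarith) ha)

-- shape lemmas
private lemma shape2 (a b c d : ℤ) (h : a*d - b*c = 1) (h' : (-a)*(-d) - (-b)*(-c) = 1) :
    mk' a b c d h = (-1) * 1 * mk' (-a) (-b) (-c) (-d) h' := by
  ext i j
  fin_cases i <;> fin_cases j <;>
    simp only [Matrix.SpecialLinearGroup.coe_mul, Matrix.SpecialLinearGroup.coe_neg, Matrix.SpecialLinearGroup.coe_one] <;>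
    simp [mk', Matrix.mul_apply, Fin.sum_univ_two]

private lemma shape3 (a b c d : ℤ) (h : a*d - b*c = 1) (h' : (-c)*b - (-d)*a = 1) :
    mk' a b c d h = 1 * S * mk' (-c) (-d) a b h' := by
  ext i j
  fin_cases i <;> fin_cases j <;>
    simp only [Matrix.SpecialLinearGroup.coe_mul, Matrix.SpecialLinearGroup.coe_neg, Matrix.SpecialLinearGroup.coe_one] <;>
    simp [mk', S, Matrix.mul_apply, Fin.sum_univ_two]

private lemma shape4 (a b c d : ℤ) (h : a*d - b*c = 1) (h' : c*(-b) - d*(-a) = 1) :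
    mk' a b c d h = (-1) * S * mk' c d (-a) (-b) h' := by
  ext i j
  fin_cases i <;> fin_cases j <;>
    simp only [Matrix.SpecialLinearGroup.coe_mul, Matrix.SpecialLinearGroup.coe_neg, Matrix.SpecialLinearGroup.coe_one] <;>
    simp [mk', S, Matrix.mul_apply, Fin.sum_univ_two]

-- case builders
section builders
variable {Q : SL(2,ℤ)} {a b c d : ℤ} {h : a*d - b*c = 1}

private def Goal (Q : SL(2,ℤ)) : Prop :=
  ∃ ε V T : SL(2,ℤ), (ε = 1 ∨ ε = -1) ∧ (V = 1 ∨ V = S) ∧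
      (T ∈ Submonoid.closure ({A, B} : Set SL(2,ℤ)) ∨
        T ∈ Submonoid.closure ({A⁻¹, B⁻¹} : Set SL(2,ℤ))) ∧
      Q = ε * V * T

private lemma caseP1 (hQ : Q = mk' a b c d h)
    (ha : 0 ≤ a) (hb : 0 ≤ b) (hc : 0 ≤ c) (hd : 0 ≤ d) : Goal Q :=
  ⟨1, 1, mk' a b c d h, Or.inl rfl, Or.inl rfl, Or.inl (memP' a b c d h ha hb hc hd),
    by rw [one_mul, one_mul]; exact hQ⟩

private lemma caseN1 (hQ : Q = mk' a b c d h)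
    (ha : 0 ≤ a) (hb : b ≤ 0) (hc : c ≤ 0) (hd : 0 ≤ d) : Goal Q :=
  ⟨1, 1, mk' a b c d h, Or.inl rfl, Or.inl rfl, Or.inr (memN a b c d h ha hb hc hd),
    by rw [one_mul, one_mul]; exact hQ⟩

private lemma caseP2 (hQ : Q = mk' a b c d h)
    (ha : a ≤ 0) (hb : b ≤ 0) (hc : c ≤ 0) (hd : d ≤ 0) : Goal Q := by
  have h' : (-a)*(-d) - (-b)*(-c) = 1 := by linear_combination h
  exact ⟨-1, 1, mk' (-a) (-b) (-c) (-d) h', Or.inr rfl, Or.inl rfl,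
    Or.inl (memP' _ _ _ _ h' (by linarith) (by linarith) (by linarith) (by linarith)),
    hQ.trans (shape2 a b c d h h')⟩

private lemma caseN2 (hQ : Q = mk' a b c d h)
    (ha : a ≤ 0) (hb : 0 ≤ b) (hc : 0 ≤ c) (hd : d ≤ 0) : Goal Q := by
  have h' : (-a)*(-d) - (-b)*(-c) = 1 := by linear_combination h
  exact ⟨-1, 1, mk' (-a) (-b) (-c) (-d) h', Or.inr rfl, Or.inl rfl,
    Or.inr (memN _ _ _ _ h' (by linarith) (by linarith) (by linarith) (by linarith)),
    hQ.trans (shape2 a b c d h h')⟩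

private lemma caseP3 (hQ : Q = mk' a b c d h)
    (ha : 0 ≤ a) (hb : 0 ≤ b) (hc : c ≤ 0) (hd : d ≤ 0) : Goal Q := by
  have h' : (-c)*b - (-d)*a = 1 := by linear_combination h
  exact ⟨1, S, mk' (-c) (-d) a b h', Or.inl rfl, Or.inr rfl,
    Or.inl (memP' _ _ _ _ h' (by linarith) (by linarith) ha hb),
    hQ.trans (shape3 a b c d h h')⟩

private lemma caseN3 (hQ : Q = mk' a b c d h)
    (ha : a ≤ 0) (hb : 0 ≤ b) (hc : c ≤ 0) (hd : 0 ≤ d) : Goal Q := by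
  have h' : (-c)*b - (-d)*a = 1 := by linear_combination h
  exact ⟨1, S, mk' (-c) (-d) a b h', Or.inl rfl, Or.inr rfl,
    Or.inr (memN _ _ _ _ h' (by linarith) (by linarith) (by linarith) hb),
    hQ.trans (shape3 a b c d h h')⟩

private lemma caseP4 (hQ : Q = mk' a b c d h)
    (ha : a ≤ 0) (hb : b ≤ 0) (hc : 0 ≤ c) (hd : 0 ≤ d) : Goal Q := by
  have h' : c*(-b) - d*(-a) = 1 := by linear_combination h
  exact ⟨-1, S, mk' c d (-a) (-b) h', Or.inr rfl, Or.inr rfl,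
    Or.inl (memP' _ _ _ _ h' hc hd (by linarith) (by linarith)),
    hQ.trans (shape4 a b c d h h')⟩

private lemma caseN4 (hQ : Q = mk' a b c d h)
    (ha : 0 ≤ a) (hb : b ≤ 0) (hc : 0 ≤ c) (hd : d ≤ 0) : Goal Q := by
  have h' : c*(-b) - d*(-a) = 1 := by linear_combination h
  exact ⟨-1, S, mk' c d (-a) (-b) h', Or.inr rfl, Or.inr rfl,
    Or.inr (memN _ _ _ _ h' hc (by linarith) (by linarith) (by linarith)),
    hQ.trans (shape4 a b c d h h')⟩

end builders

/-- Every Q ∈ SL(2,ℤ) can be written as ε·V·T with ε ∈ {1,-1}, V ∈ {1, S},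
and T in the submonoid generated by {A, B} or in the one generated by {A⁻¹, B⁻¹}. -/
theorem decomposition_VT (Q : SL(2,ℤ)) :
    ∃ ε V T : SL(2,ℤ), (ε = 1 ∨ ε = -1) ∧ (V = 1 ∨ V = S) ∧
      (T ∈ Submonoid.closure ({A, B} : Set SL(2,ℤ)) ∨
        T ∈ Submonoid.closure ({A⁻¹, B⁻¹} : Set SL(2,ℤ))) ∧
      Q = ε * V * T := by
  set a := Q.1 0 0 with hA
  set b := Q.1 0 1 with hB
  set c := Q.1 1 0 with hC
  set d := Q.1 1 1 with hD
  have h : a*d - b*c = 1 := by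
    have := Q.2
    rw [Matrix.det_fin_two] at this
    linarith
  have hQ : Q = mk' a b c d h := by
    ext i j
    fin_cases i <;> fin_cases j <;> simp [mk', hA, hB, hC, hD]
  show Goal Q
  rcases le_total 0 a with ha | ha <;> rcases le_total 0 b with hb | hb <;>
    rcases le_total 0 c with hc | hc <;> rcases le_total 0 d with hd | hd
  -- a≥0, b≥0, c≥0, d≥0
  · exact caseP1 hQ ha hb hc hd
  -- a≥0, b≥0, c≥0, d≤0
  · exfalso; nlinarith
  -- a≥0, b≥0, c≤0, d≥0
  · rcases eq_or_lt_of_le hb with hb0 | hb1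
    · exact caseN1 hQ ha (le_of_eq hb0.symm) hc hd
    rcases eq_or_lt_of_le hd with hd0 | hd1
    · exact caseP3 hQ ha hb hc (le_of_eq hd0.symm)
    rcases eq_or_lt_of_le ha with ha0 | ha1
    · exact caseN3 hQ (le_of_eq ha0.symm) hb hc hd
    rcases eq_or_lt_of_le hc with hc0 | hc1
    · exact caseP1 hQ ha hb (le_of_eq hc0.symm) hd
    exfalso; nlinarith
  -- a≥0, b≥0, c≤0, d≤0
  · exact caseP3 hQ ha hb hc hd
  -- a≥0, b≤0, c≥0, d≥0
  · rcases eq_or_lt_of_le hd with hd0 | hd1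
    · exact caseN4 hQ ha hb hc (le_of_eq hd0.symm)
    rcases eq_or_lt_of_le hb with hb0 | hb1
    · exact caseP1 hQ ha (le_of_eq hb0.symm) hc hd
    rcases eq_or_lt_of_le ha with ha0 | ha1
    · exact caseP4 hQ (le_of_eq ha0.symm) hb hc hd
    rcases eq_or_lt_of_le hc with hc0 | hc1
    · exact caseN1 hQ ha hb (le_of_eq hc0.symm) hd
    exfalso; nlinarith
  -- a≥0, b≤0, c≥0, d≤0
  · exact caseN4 hQ ha hb hc hd
  -- a≥0, b≤0, c≤0, d≥0
  · exact caseN1 hQ ha hb hc hd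
  -- a≥0, b≤0, c≤0, d≤0
  · exfalso; nlinarith
  -- a≤0, b≥0, c≥0, d≥0
  · exfalso; nlinarith
  -- a≤0, b≥0, c≥0, d≤0
  · exact caseN2 hQ ha hb hc hd
  -- a≤0, b≥0, c≤0, d≥0
  · exact caseN3 hQ ha hb hc hd
  -- a≤0, b≥0, c≤0, d≤0
  · rcases eq_or_lt_of_le hb with hb0 | hb1
    · exact caseP2 hQ ha (le_of_eq hb0.symm) hc hd
    rcases eq_or_lt_of_le hc with hc0 | hc1
    · exact caseN2 hQ ha hb (le_of_eq hc0.symm) hd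
    rcases eq_or_lt_of_le ha with ha0 | ha1
    · exact caseP3 hQ (le_of_eq ha0.symm) hb hc hd
    rcases eq_or_lt_of_le hd with hd0 | hd1
    · exact caseN3 hQ ha hb hc (le_of_eq hd0.symm)
    exfalso; nlinarith
  -- a≤0, b≤0, c≥0, d≥0
  · exact caseP4 hQ ha hb hc hd
  -- a≤0, b≤0, c≥0, d≤0
  · rcases eq_or_lt_of_le hb with hb0 | hb1
    · exact caseN2 hQ ha (le_of_eq hb0.symm) hc hd
    rcases eq_or_lt_of_le hd with hd0 | hd1
    · exact caseP4 hQ ha hb hc (le_of_eq hd0.symm)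
    rcases eq_or_lt_of_le hc with hc0 | hc1
    · exact caseP2 hQ ha hb (le_of_eq hc0.symm) hd
    rcases eq_or_lt_of_le ha with ha0 | ha1
    · exact caseN4 hQ (le_of_eq ha0.symm) hb hc hd
    exfalso; nlinarith
  -- a≤0, b≤0, c≤0, d≥0
  · exfalso; nlinarith
  -- a≤0, b≤0, c≤0, d≤0
  · exact caseP2 hQ ha hb hc hd
end

section
/- If M belongs to the submonoid of SL(2,ℤ) generated by {A, B} and M is not the identity (i.e., M is a nonempty product of positive powers of A and B), then M ≠ -1, M ≠ S, and M ≠ -S. -/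
open Matrix MatrixGroups

lemma entries_nonneg (M : SL(2,ℤ))
    (hM : M ∈ Submonoid.closure ({A, B} : Set SL(2,ℤ))) :
    ∀ i j, 0 ≤ M.1 i j := by
  induction hM using Submonoid.closure_induction with
  | mem x hx =>
    rcases hx with h | h <;> subst h <;> intro i j <;>
      fin_cases i <;> fin_cases j <;> simp [A, B]
  | one => intro i j; fin_cases i <;> fin_cases j <;> simp
  | mul x y _ _ hx hy =>
    intro i j
    have : (x * y).1 = x.1 * y.1 := rfl
    rw [this, Matrix.mul_apply]
    exact Finset.sum_nonneg fun k _ => mul_nonneg (hx i k) (hy k j)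

/-- A nonidentity element of the submonoid generated by {A, B} is distinct
from -1, S and -S. -/
theorem positive_word_ne (M : SL(2,ℤ))
    (hM : M ∈ Submonoid.closure ({A, B} : Set SL(2,ℤ))) (hne : M ≠ 1) :
    M ≠ -1 ∧ M ≠ S ∧ M ≠ -S := by
  have h := entries_nonneg M hM
  refine ⟨?_, ?_, ?_⟩ <;> intro heq <;> subst heq
  · have := h 0 0; simp at this
  · have := h 1 0; simp [S] at this
  · have := h 0 1; simp only [Matrix.SpecialLinearGroup.coe_neg] at this; simp [S] at this
end

section
/- For Q, Q' ∈ SL(2,ℤ), the second columns of Q and Q' are proportional over ℚ (i.e., there exists a nonzero rational r with Q'₀₁ = r·Q₀₁ and Q'₁₁ = r·Q₁₁) if and only if there exists k ∈ ℤ such that Q' = Q·Bᵏ or Q' = -(Q·Bᵏ). -/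
open Matrix MatrixGroups

lemma B_zpow_coe (k : ℤ) :
    ((B ^ k : SL(2,ℤ)) : Matrix (Fin 2) (Fin 2) ℤ) = !![1,0;k,1] := by
  induction k using Int.induction_on with
  | zero => ext i j; fin_cases i <;> fin_cases j <;> simp
  | succ n ih =>
      rw [_root_.zpow_add_one, Matrix.SpecialLinearGroup.coe_mul, ih]
      ext i j; fin_cases i <;> fin_cases j <;>
        simp [B, Matrix.mul_apply, Fin.sum_univ_two]
  | pred n ih =>
      rw [sub_eq_add_neg, _root_.zpow_add, Matrix.SpecialLinearGroup.coe_mul, ih,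
        _root_.zpow_neg, zpow_one]
      have : ((B⁻¹ : SL(2,ℤ)) : Matrix (Fin 2) (Fin 2) ℤ) = !![1,0;-1,1] := by
        rw [Matrix.SpecialLinearGroup.coe_inv]
        ext i j; fin_cases i <;> fin_cases j <;>
          simp [B, Matrix.adjugate_fin_two]
      rw [this]
      ext i j; fin_cases i <;> fin_cases j <;>
        simp [Matrix.mul_apply, Fin.sum_univ_two]

/-- The second columns of Q and Q' are proportional over ℚ iff Q' = ±Q·Bᵏ
for some k ∈ ℤ. -/
theorem second_columns_proportional_iff (Q Q' : SL(2,ℤ)) :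
    (∃ r : ℚ, r ≠ 0 ∧
        ((Q' : Matrix (Fin 2) (Fin 2) ℤ) 0 1 : ℚ) =
          r * ((Q : Matrix (Fin 2) (Fin 2) ℤ) 0 1 : ℚ) ∧
        ((Q' : Matrix (Fin 2) (Fin 2) ℤ) 1 1 : ℚ) =
          r * ((Q : Matrix (Fin 2) (Fin 2) ℤ) 1 1 : ℚ)) ↔
      ∃ k : ℤ, Q' = Q * B ^ k ∨ Q' = -(Q * B ^ k) := by
  constructor
  · rintro ⟨r, -, h1, h2⟩
    have key : (Q' : Matrix (Fin 2) (Fin 2) ℤ) 0 1 * (Q : Matrix (Fin 2) (Fin 2) ℤ) 1 1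
        = (Q : Matrix (Fin 2) (Fin 2) ℤ) 0 1 * (Q' : Matrix (Fin 2) (Fin 2) ℤ) 1 1 := by
      have : (((Q' : Matrix (Fin 2) (Fin 2) ℤ) 0 1 * (Q : Matrix (Fin 2) (Fin 2) ℤ) 1 1 : ℤ) : ℚ)
          = (((Q : Matrix (Fin 2) (Fin 2) ℤ) 0 1 * (Q' : Matrix (Fin 2) (Fin 2) ℤ) 1 1 : ℤ) : ℚ) := by
        push_cast
        rw [h1, h2]; ring
      exact_mod_cast this
    set M := Q⁻¹ * Q' with hMdef
    have hQ' : Q' = Q * M := (mul_inv_cancel_left Q Q').symm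
    have hMcoe : (M : Matrix (Fin 2) (Fin 2) ℤ) =
        (Q : Matrix (Fin 2) (Fin 2) ℤ).adjugate * (Q' : Matrix (Fin 2) (Fin 2) ℤ) := by
      rw [hMdef, Matrix.SpecialLinearGroup.coe_mul, Matrix.SpecialLinearGroup.coe_inv]
    have hM01 : (M : Matrix (Fin 2) (Fin 2) ℤ) 0 1 = 0 := by
      rw [hMcoe]
      simp [Matrix.adjugate_fin_two, Matrix.mul_apply, Fin.sum_univ_two]
      linarith [key]
    have hdet : (M : Matrix (Fin 2) (Fin 2) ℤ) 0 0 * (M : Matrix (Fin 2) (Fin 2) ℤ) 1 1 = 1 := by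
      have := M.property
      rw [Matrix.det_fin_two] at this
      rw [hM01] at this; linarith
    rcases Int.mul_eq_one_iff_eq_one_or_neg_one.mp hdet with ⟨h00, h11⟩ | ⟨h00, h11⟩
    · refine ⟨(M : Matrix (Fin 2) (Fin 2) ℤ) 1 0, Or.inl ?_⟩
      rw [hQ']
      congr 1
      apply Subtype.ext
      show (M : Matrix (Fin 2) (Fin 2) ℤ) = _
      rw [B_zpow_coe]
      ext i j
      fin_cases i <;> fin_cases j <;> simp [h00, h11, hM01]
    · obtain ⟨m, hm⟩ : ∃ m, (M : Matrix (Fin 2) (Fin 2) ℤ) 1 0 = m := ⟨_, rfl⟩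
      refine ⟨-m, Or.inr ?_⟩
      have hM : M = -(B ^ (-m)) := by
        apply Subtype.ext
        show (M : Matrix (Fin 2) (Fin 2) ℤ) = _
        rw [Matrix.SpecialLinearGroup.coe_neg, B_zpow_coe]
        ext i j
        fin_cases i <;> fin_cases j <;> simp [h00, h11, hM01, hm]
      rw [hQ', hM, mul_neg]
  · rintro ⟨k, h | h⟩
    · refine ⟨1, one_ne_zero, ?_, ?_⟩ <;>
      · rw [h, Matrix.SpecialLinearGroup.coe_mul, B_zpow_coe]
        simp [Matrix.mul_apply, Fin.sum_univ_two]
    · refine ⟨-1, by norm_num, ?_, ?_⟩ <;>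
      · rw [h, Matrix.SpecialLinearGroup.coe_neg, Matrix.SpecialLinearGroup.coe_mul, B_zpow_coe]
        simp [Matrix.mul_apply, Fin.sum_univ_two]
end

section
/- The map sending Q ∈ SL(2,ℤ) to the point of the projective line ℙ¹(ℚ) (the projectivization of ℚ²) determined by the second column (Q₀₁, Q₁₁) of Q descends to a bijection from the coset space SL(2,ℤ) ⧸ H onto ℙ¹(ℚ), where H is the subgroup of SL(2,ℤ) generated by B and -1. -/
open Matrix MatrixGroups

/-- The second column of Q ∈ SL(2,ℤ), as a vector of ℚ². -/
def secondCol (Q : SL(2,ℤ)) : Fin 2 → ℚ :=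
  ![((Q : Matrix (Fin 2) (Fin 2) ℤ) 0 1 : ℚ), ((Q : Matrix (Fin 2) (Fin 2) ℤ) 1 1 : ℚ)]

/-- The subgroup of SL(2,ℤ) generated by B and -1. -/
def H : Subgroup SL(2,ℤ) := Subgroup.closure {B, -1}

lemma secondCol_ne_zero (Q : SL(2,ℤ)) : secondCol Q ≠ 0 := by
  intro h
  have h0 : (Q : Matrix (Fin 2) (Fin 2) ℤ) 0 1 = 0 := by
    have := congrFun h 0; simpa [secondCol] using this
  have h1 : (Q : Matrix (Fin 2) (Fin 2) ℤ) 1 1 = 0 := by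
    have := congrFun h 1; simpa [secondCol] using this
  have hd := Q.2
  rw [Matrix.det_fin_two, h0, h1] at hd
  simp at hd

noncomputable def phi (Q : SL(2,ℤ)) : Projectivization ℚ (Fin 2 → ℚ) :=
  Projectivization.mk ℚ (secondCol Q) (secondCol_ne_zero Q)

lemma phi_mul_B (Q : SL(2,ℤ)) : phi (Q * B) = phi Q := by
  have : secondCol (Q * B) = secondCol Q := by
    funext i; simp only [secondCol, Matrix.SpecialLinearGroup.coe_mul]; fin_cases i <;>
      simp [secondCol, B, Matrix.mul_apply, Fin.sum_univ_two]
  simp [phi, this]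

lemma phi_mul_neg_one (Q : SL(2,ℤ)) : phi (Q * (-1)) = phi Q := by
  have hcol : secondCol (Q * (-1)) = -secondCol Q := by
    funext i; fin_cases i <;>
      simp [secondCol, Matrix.mul_apply, Fin.sum_univ_two]
  rw [phi, phi, Projectivization.mk_eq_mk_iff]
  exact ⟨-1, by rw [hcol]; ext i; simp⟩

lemma phi_mul_mem (Q : SL(2,ℤ)) {h : SL(2,ℤ)} (hh : h ∈ H) : phi (Q * h) = phi Q := by
  revert Q
  refine Subgroup.closure_induction ?_ ?_ ?_ ?_ hh
  · rintro x (rfl | rfl)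
    · exact phi_mul_B
    · exact phi_mul_neg_one
  · intro Q; rw [mul_one]
  · intro x y _ _ hx hy Q
    rw [← mul_assoc, hy, hx]
  · intro x _ hx Q
    have := hx (Q * x⁻¹)
    rw [mul_assoc, inv_mul_cancel, mul_one] at this; exact this.symm

def Bz (n : ℤ) : SL(2,ℤ) := ⟨!![1,0;n,1], by norm_num [Matrix.det_fin_two_of]⟩

lemma Bz_mul (m n : ℤ) : Bz m * Bz n = Bz (m + n) := by
  ext i j; rw [Matrix.SpecialLinearGroup.coe_mul]; fin_cases i <;> fin_cases j <;>
    simp [Bz, Matrix.mul_apply, Fin.sum_univ_two]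

lemma Bz_zero : Bz 0 = 1 := by
  ext i j; fin_cases i <;> fin_cases j <;> simp [Bz]

lemma B_zpow (n : ℤ) : (B ^ n : SL(2,ℤ)) = Bz n := by
  have hB : B = Bz 1 := rfl
  have hinv : (B : SL(2,ℤ))⁻¹ = Bz (-1) := by
    rw [hB]; exact inv_eq_of_mul_eq_one_right (by rw [Bz_mul]; norm_num [Bz_zero])
  induction n using Int.induction_on with
  | zero => rw [zpow_zero, Bz_zero]
  | succ k ih => rw [_root_.zpow_add, zpow_one, ih, hB, Bz_mul]
  | pred k ih => rw [_root_.zpow_sub_one, ih, hinv, Bz_mul, sub_eq_add_neg]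

lemma mem_H_of_upper_zero (P : SL(2,ℤ)) (h01 : (P : Matrix (Fin 2) (Fin 2) ℤ) 0 1 = 0) :
    P ∈ H := by
  have hB : B ∈ H := Subgroup.subset_closure (Or.inl rfl)
  have hneg : (-1 : SL(2,ℤ)) ∈ H := Subgroup.subset_closure (Or.inr rfl)
  have hd := P.2
  rw [Matrix.det_fin_two, h01] at hd
  simp only [mul_zero, zero_mul, sub_zero] at hd
  rcases Int.mul_eq_one_iff_eq_one_or_neg_one.mp hd with ⟨h00, h11⟩ | ⟨h00, h11⟩
  · have : P = B ^ ((P : Matrix (Fin 2) (Fin 2) ℤ) 1 0) := by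
      rw [B_zpow]
      ext i j; fin_cases i <;> fin_cases j <;> simp [Bz, h00, h01, h11]
    rw [this]; exact zpow_mem hB _
  · have : P = (-1) * B ^ (-(P : Matrix (Fin 2) (Fin 2) ℤ) 1 0) := by
      rw [B_zpow]
      ext i j; rw [Matrix.SpecialLinearGroup.coe_mul]; fin_cases i <;> fin_cases j <;>
        simp [Bz, Matrix.mul_apply, Fin.sum_univ_two, h00, h01, h11]
    rw [this]; exact mul_mem hneg (zpow_mem hB _)

lemma inj_aux {Q R : SL(2,ℤ)} (h : phi Q = phi R) : Q⁻¹ * R ∈ H := by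
  rw [phi, phi, Projectivization.mk_eq_mk_iff] at h
  obtain ⟨a, ha⟩ := h
  have h0 : ((Q : Matrix (Fin 2) (Fin 2) ℤ) 0 1 : ℚ) = a * (R : Matrix (Fin 2) (Fin 2) ℤ) 0 1 := by
    have := congrFun ha 0; simpa [secondCol, Units.smul_def] using this.symm
  have h1 : ((Q : Matrix (Fin 2) (Fin 2) ℤ) 1 1 : ℚ) = a * (R : Matrix (Fin 2) (Fin 2) ℤ) 1 1 := by
    have := congrFun ha 1; simpa [secondCol, Units.smul_def] using this.symm
  have cross : (Q : Matrix (Fin 2) (Fin 2) ℤ) 1 1 * (R : Matrix (Fin 2) (Fin 2) ℤ) 0 1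
      = (Q : Matrix (Fin 2) (Fin 2) ℤ) 0 1 * (R : Matrix (Fin 2) (Fin 2) ℤ) 1 1 := by
    have : ((Q : Matrix (Fin 2) (Fin 2) ℤ) 1 1 * (R : Matrix (Fin 2) (Fin 2) ℤ) 0 1 : ℚ)
        = (Q : Matrix (Fin 2) (Fin 2) ℤ) 0 1 * (R : Matrix (Fin 2) (Fin 2) ℤ) 1 1 := by
      push_cast
      rw [h0, h1]; ring
    exact_mod_cast this
  apply mem_H_of_upper_zero
  have hcoe : ((Q⁻¹ * R : SL(2,ℤ)) : Matrix (Fin 2) (Fin 2) ℤ) = adjugate (Q : Matrix (Fin 2) (Fin 2) ℤ) * (R : Matrix (Fin 2) (Fin 2) ℤ) := by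
    rw [Matrix.SpecialLinearGroup.coe_mul, Matrix.SpecialLinearGroup.coe_inv]
  rw [hcoe, Matrix.adjugate_fin_two]
  simp [Matrix.mul_apply, Fin.sum_univ_two]
  linarith [cross]

lemma surj_aux (v : Fin 2 → ℚ) (hv : v ≠ 0) :
    ∃ Q : SL(2,ℤ), phi Q = Projectivization.mk ℚ v hv := by
  set x := v 0 with hx
  set y := v 1 with hy
  have hv' : x ≠ 0 ∨ y ≠ 0 := by
    by_contra hc
    push_neg at hc
    apply hv
    funext i; fin_cases i <;> simp [hc.1, hc.2, ← hx, ← hy]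
  set c' : ℤ := x.num * y.den with hc'
  set d' : ℤ := y.num * x.den with hd'
  have hne : c' ≠ 0 ∨ d' ≠ 0 := by
    rcases hv' with h | h
    · left; simp [hc', Rat.num_ne_zero.mpr h, y.den_nz]
    · right; simp [hd', Rat.num_ne_zero.mpr h, x.den_nz]
  set g : ℕ := Int.gcd c' d' with hg
  have hgpos : 0 < g := by
    rcases hne with h | h
    · exact Int.gcd_pos_of_ne_zero_left _ h
    · exact Int.gcd_pos_of_ne_zero_right _ h
  set c : ℤ := c' / g with hc
  set d : ℤ := d' / g with hd
  have hcop : Int.gcd c d = 1 := Int.gcd_div_gcd_div_gcd hgpos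
  obtain ⟨u, w, huw⟩ := Int.isCoprime_iff_gcd_eq_one.mpr hcop
  refine ⟨⟨!![w, c; -u, d], by rw [Matrix.det_fin_two_of]; linarith⟩, ?_⟩
  unfold phi
  rw [Projectivization.mk_eq_mk_iff]
  have hg0 : ((g : ℚ)) ≠ 0 := by positivity
  have hxden : ((x.den : ℚ)) ≠ 0 := by exact_mod_cast x.den_nz
  have hyden : ((y.den : ℚ)) ≠ 0 := by exact_mod_cast y.den_nz
  set t : ℚ := ((x.den : ℚ) * y.den) / g with ht
  have ht0 : t ≠ 0 := by
    rw [ht]; exact div_ne_zero (mul_ne_zero hxden hyden) hg0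
  refine ⟨Units.mk0 t ht0, ?_⟩
  have hdvd_c : (g : ℤ) ∣ c' := Int.gcd_dvd_left _ _
  have hdvd_d : (g : ℤ) ∣ d' := Int.gcd_dvd_right _ _
  funext i; fin_cases i
  · show t * v 0 = _
    have : t * x = (c : ℚ) := by
      rw [hc, Int.cast_div_charZero hdvd_c, ht, hc']
      push_cast
      field_simp
      rw [mul_comm]; exact Rat.mul_den_eq_num x
    simpa [secondCol, ← hx] using this
  · show t * v 1 = _
    have : t * y = (d : ℚ) := by
      rw [hd, Int.cast_div_charZero hdvd_d, ht, hd']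
      push_cast
      field_simp
      rw [mul_comm]; exact Rat.mul_den_eq_num y
    simpa [secondCol, ← hy] using this

/-- The map sending Q to the point of ℙ¹(ℚ) determined by its second column
descends to a bijection from SL(2,ℤ) ⧸ H onto ℙ¹(ℚ). -/
theorem coset_space_bij_projective_line :
    ∃ f : (SL(2,ℤ) ⧸ H) → Projectivization ℚ (Fin 2 → ℚ),
      Function.Bijective f ∧
      ∀ (Q : SL(2,ℤ)) (h : secondCol Q ≠ 0),
        f (QuotientGroup.mk Q) = Projectivization.mk ℚ (secondCol Q) h := by
  have wd : ∀ a b : SL(2,ℤ), (QuotientGroup.leftRel H) a b → phi a = phi b := by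
    intro a b hab
    rw [QuotientGroup.leftRel_apply] at hab
    have := phi_mul_mem a hab
    rw [mul_inv_cancel_left] at this; exact this.symm
  refine ⟨Quotient.lift phi wd, ⟨?_, ?_⟩, fun Q h => rfl⟩
  · intro q r
    induction q using Quotient.ind with | _ a =>
    induction r using Quotient.ind with | _ b =>
    intro hab
    exact Quotient.sound (QuotientGroup.leftRel_apply.mpr (inj_aux hab))
  · intro p
    induction p using Projectivization.ind with | _ v hv =>
    obtain ⟨Q, hQ⟩ := surj_aux v hv
    exact ⟨QuotientGroup.mk Q, hQ⟩
end
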